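/- If σ₀ : B × A → k is a skew pairing of Hopf algebras A and B, then the map γ₀ on the tensor product Hopf algebra A ⊗ B defined by γ₀(a ⊗ b, c ⊗ d) = ε(a)·σ₀(c, b)·ε(d) is a Hopf 2-cocycle on A ⊗ B. -/

import Mathlib

open TensorProduct

noncomputable section

/-- Convolution product of two `k`-valued linear functionals on a coalgebra:
`(f * g)(x) = Σ f(x₍₁₎) g(x₍₂₎)`. -/
def conv {k C : Type} [Field k] [AddCommGroup C] [Module k C] [Coalgebra k C]
    (f g : C →ₗ[k] k) : C →ₗ[k] k :=
  (TensorProduct.lid k k).toLinearMap ∘ₗ TensorProduct.map f g ∘ₗ Coalgebra.comul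

variable {k H : Type} [Field k] [Ring H] [Bialgebra k H]

/-- The linear map `x ⊗ y ⊗ z ↦ σ(x ⊗ y)·ε(z)`. -/
def sigmaEps (σ : H ⊗[k] H →ₗ[k] k) : H ⊗[k] (H ⊗[k] H) →ₗ[k] k :=
  (TensorProduct.lid k k).toLinearMap ∘ₗ TensorProduct.map σ Coalgebra.counit
    ∘ₗ (TensorProduct.assoc k H H H).symm.toLinearMap

/-- The linear map `x ⊗ y ⊗ z ↦ σ((x·y) ⊗ z)`. -/
def sigmaMul (σ : H ⊗[k] H →ₗ[k] k) : H ⊗[k] (H ⊗[k] H) →ₗ[k] k :=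
  σ ∘ₗ TensorProduct.map (LinearMap.mul' k H) LinearMap.id
    ∘ₗ (TensorProduct.assoc k H H H).symm.toLinearMap

/-- The linear map `x ⊗ y ⊗ z ↦ ε(x)·σ(y ⊗ z)`. -/
def epsSigma (σ : H ⊗[k] H →ₗ[k] k) : H ⊗[k] (H ⊗[k] H) →ₗ[k] k :=
  (TensorProduct.lid k k).toLinearMap ∘ₗ TensorProduct.map Coalgebra.counit σ

/-- The linear map `x ⊗ y ⊗ z ↦ σ(x ⊗ (y·z))`. -/
def mulSigma (σ : H ⊗[k] H →ₗ[k] k) : H ⊗[k] (H ⊗[k] H) →ₗ[k] k :=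
  σ ∘ₗ TensorProduct.map LinearMap.id (LinearMap.mul' k H)

/-- A Hopf 2-cocycle on `H`: convolution-invertible, normalized, satisfying
`Σ σ(x₍₁₎, y₍₁₎) σ(x₍₂₎y₍₂₎, z) = Σ σ(y₍₁₎, z₍₁₎) σ(x, y₍₂₎z₍₂₎)`. -/
def IsHopfTwoCocycle (σ : H ⊗[k] H →ₗ[k] k) : Prop :=
  (∃ τ : H ⊗[k] H →ₗ[k] k, conv σ τ = Coalgebra.counit ∧ conv τ σ = Coalgebra.counit) ∧
  σ (1 ⊗ₜ[k] 1) = 1 ∧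
  conv (sigmaEps σ) (sigmaMul σ) = conv (epsSigma σ) (mulSigma σ)

/-- A skew pairing of Hopf algebras `A`, `B` (first argument from `A`, second
from `B`): convolution invertible, with
`σ₀(cc', b) = Σ σ₀(c, b₍₁₎)σ₀(c', b₍₂₎)`, `σ₀(c, bb') = Σ σ₀(c₍₁₎, b')σ₀(c₍₂₎, b)`,
`σ₀(1, b) = ε(b)`, `σ₀(c, 1) = ε(c)`. -/
def IsSkewPairing {k A B : Type} [Field k] [Ring A] [HopfAlgebra k A]
    [Ring B] [HopfAlgebra k B] (σ₀ : A ⊗[k] B →ₗ[k] k) : Prop :=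
  (∃ τ : A ⊗[k] B →ₗ[k] k, conv σ₀ τ = Coalgebra.counit ∧ conv τ σ₀ = Coalgebra.counit) ∧
  (σ₀ ∘ₗ TensorProduct.map (LinearMap.mul' k A) (LinearMap.id : B →ₗ[k] B) =
    (TensorProduct.lid k k).toLinearMap ∘ₗ TensorProduct.map σ₀ σ₀
      ∘ₗ (TensorProduct.tensorTensorTensorComm k A A B B).toLinearMap
      ∘ₗ TensorProduct.map (LinearMap.id : A ⊗[k] A →ₗ[k] A ⊗[k] A) Coalgebra.comul) ∧
  (σ₀ ∘ₗ TensorProduct.map (LinearMap.id : A →ₗ[k] A) (LinearMap.mul' k B) =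
    (TensorProduct.lid k k).toLinearMap ∘ₗ TensorProduct.map σ₀ σ₀
      ∘ₗ (TensorProduct.tensorTensorTensorComm k A A B B).toLinearMap
      ∘ₗ TensorProduct.map Coalgebra.comul (TensorProduct.comm k B B).toLinearMap) ∧
  (∀ b : B, σ₀ ((1 : A) ⊗ₜ[k] b) = Coalgebra.counit b) ∧
  (∀ a : A, σ₀ (a ⊗ₜ[k] (1 : B)) = Coalgebra.counit a)

/-!
Write `π_A : A ⊗ B → A` and `π_B : A ⊗ B → B` for the bialgebra projections
`a ⊗ b ↦ ε(b) a` and `a ⊗ b ↦ ε(a) b`. Then `γ₀(x, y) = σ₀(π_A y, π_B x)`: the cochain is the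
skew pairing pulled back along a coalgebra map, so it inherits a convolution inverse, and its
normalisation is that of `σ₀`. Expanding both sides of the cocycle identity with the two
multiplicativity axioms of `σ₀` gives the same triple Sweedler sum, except that the two legs of
the middle variable `y` are exchanged. This exchange is harmless because
`π_A(y₁) ⊗ π_B(y₂) = y = π_A(y₂) ⊗ π_B(y₁)`.
-/

open Coalgebra

section Convolution

variable {k C D : Type} [Field k] [AddCommGroup C] [Module k C] [Coalgebra k C]
  [AddCommGroup D] [Module k D] [Coalgebra k D]

lemma conv_apply_repr (f g : C →ₗ[k] k) {x : C} {ι : Type*} (r : Repr k x ι) :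
    conv f g x = ∑ i ∈ r.index, f (r.left i) * g (r.right i) := by
  simp [conv, ← r.eq]

lemma sum_smul_counit_eq {x : C} {ι : Type*} (r : Repr k x ι) :
    ∑ i ∈ r.index, counit (R := k) (r.right i) • r.left i = x := by
  simpa only [map_sum, TensorProduct.rid_tmul, one_smul]
    using congr(TensorProduct.rid k C $(sum_tmul_counit_eq r))

lemma sum_counit_mul_eq (g : C →ₗ[k] k) {x : C} {ι : Type*} (r : Repr k x ι) :
    ∑ i ∈ r.index, counit (R := k) (r.left i) * g (r.right i) = g x := by
  simpa using congr(g $(sum_counit_smul r))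

lemma conv_comp_coalgHom (f g : C →ₗ[k] k) (φ : D →ₗc[k] C) :
    conv (f ∘ₗ φ) (g ∘ₗ φ) = conv f g ∘ₗ (φ : D →ₗ[k] C) := by
  simp only [conv, LinearMap.comp_assoc, ← CoalgHomClass.map_comp_comul φ, TensorProduct.map_comp]

lemma exists_conv_inverse_comp_coalgHom {f : C →ₗ[k] k}
    (hf : ∃ g : C →ₗ[k] k, conv f g = counit ∧ conv g f = counit) (φ : D →ₗc[k] C) :
    ∃ g : D →ₗ[k] k, conv (f ∘ₗ φ) g = counit ∧ conv g (f ∘ₗ φ) = counit := by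
  obtain ⟨g, hfg, hgf⟩ := hf
  exact ⟨g ∘ₗ φ, by rw [conv_comp_coalgHom, hfg, CoalgHomClass.counit_comp],
    by rw [conv_comp_coalgHom, hgf, CoalgHomClass.counit_comp]⟩

end Convolution

section TwoCocycle

variable {k H : Type} [Field k] [Ring H] [Bialgebra k H] (σ : H ⊗[k] H →ₗ[k] k)

lemma conv_sigmaEps_sigmaMul_tmul {x y : H} (z : H) {ι κ : Type*} (rx : Repr k x ι)
    (ry : Repr k y κ) :
    conv (sigmaEps σ) (sigmaMul σ) (x ⊗ₜ (y ⊗ₜ z)) =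
      ∑ i ∈ rx.index, ∑ j ∈ ry.index,
        σ (rx.left i ⊗ₜ ry.left j) * σ ((rx.right i * ry.right j) ⊗ₜ z) := by
  have hz (w : H) : ∑ l ∈ (ℛ k z).index,
      counit (R := k) ((ℛ k z).left l) * σ (w ⊗ₜ (ℛ k z).right l) = σ (w ⊗ₜ z) :=
    sum_counit_mul_eq (σ ∘ₗ TensorProduct.mk k H H w) _
  rw [conv_apply_repr _ _ (rx.tmul (ry.tmul (ℛ k z)))]
  simp [sigmaEps, sigmaMul, Finset.sum_product, mul_assoc, ← Finset.mul_sum, hz]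

lemma conv_epsSigma_mulSigma_tmul (x : H) {y z : H} {κ ι : Type*} (ry : Repr k y κ)
    (rz : Repr k z ι) :
    conv (epsSigma σ) (mulSigma σ) (x ⊗ₜ (y ⊗ₜ z)) =
      ∑ j ∈ ry.index, ∑ l ∈ rz.index,
        σ (ry.left j ⊗ₜ rz.left l) * σ (x ⊗ₜ (ry.right j * rz.right l)) := by
  have hx (w : H) : ∑ i ∈ (ℛ k x).index,
      counit (R := k) ((ℛ k x).left i) * σ ((ℛ k x).right i ⊗ₜ w) = σ (x ⊗ₜ w) :=
    sum_counit_mul_eq (σ ∘ₗ (TensorProduct.mk k H H).flip w) _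
  rw [conv_apply_repr _ _ ((ℛ k x).tmul (ry.tmul rz))]
  simp only [epsSigma, mulSigma, Repr.tmul_index, Repr.tmul_left, Repr.tmul_right,
    Finset.sum_product, LinearMap.coe_comp, LinearEquiv.coe_coe, Function.comp_apply,
    TensorProduct.map_tmul, TensorProduct.lid_tmul, smul_eq_mul, LinearMap.id_coe, id_eq,
    LinearMap.mul'_apply]
  rw [Finset.sum_comm]
  refine Finset.sum_congr rfl fun j _ => ?_
  rw [Finset.sum_comm]
  refine Finset.sum_congr rfl fun l _ => ?_
  rw [← hx, Finset.mul_sum]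
  exact Finset.sum_congr rfl fun i _ => by ring

end TwoCocycle

namespace IsSkewPairing

variable {k A B : Type} [Field k] [Ring A] [HopfAlgebra k A] [Ring B] [HopfAlgebra k B]
  {σ₀ : A ⊗[k] B →ₗ[k] k}

lemma apply_mul_tmul (hσ₀ : IsSkewPairing σ₀) (a a' : A) {b : B} {ι : Type*}
    (rb : Repr k b ι) :
    σ₀ ((a * a') ⊗ₜ b) = ∑ j ∈ rb.index, σ₀ (a ⊗ₜ rb.left j) * σ₀ (a' ⊗ₜ rb.right j) := by
  have h := congr($(hσ₀.2.1) ((a ⊗ₜ[k] a') ⊗ₜ[k] b))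
  simp only [LinearMap.coe_comp, Function.comp_apply, TensorProduct.map_tmul, LinearMap.id_apply,
    LinearMap.mul'_apply] at h
  rw [h, ← rb.eq]
  simp [TensorProduct.tmul_sum]

lemma apply_tmul_mul (hσ₀ : IsSkewPairing σ₀) {a : A} {ι : Type*} (ra : Repr k a ι)
    (b b' : B) :
    σ₀ (a ⊗ₜ (b * b')) = ∑ i ∈ ra.index, σ₀ (ra.left i ⊗ₜ b') * σ₀ (ra.right i ⊗ₜ b) := by
  have h := congr($(hσ₀.2.2.1) (a ⊗ₜ[k] (b ⊗ₜ[k] b')))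
  simp only [LinearMap.coe_comp, Function.comp_apply, TensorProduct.map_tmul, LinearMap.id_apply,
    LinearMap.mul'_apply] at h
  rw [h, ← ra.eq]
  simp [TensorProduct.sum_tmul]

lemma apply_one_tmul_one (hσ₀ : IsSkewPairing σ₀) : σ₀ ((1 : A) ⊗ₜ (1 : B)) = 1 := by
  rw [hσ₀.2.2.2.1, Bialgebra.counit_one]

end IsSkewPairing

section Pullback

variable {k A B H : Type} [Field k] [Ring A] [Bialgebra k A] [Ring B] [Bialgebra k B]
  [Ring H] [Bialgebra k H]

def pullbackPairing (σ₀ : A ⊗[k] B →ₗ[k] k) (ψ : H →ₐc[k] A) (φ : H →ₐc[k] B) :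
    H ⊗[k] H →ₗ[k] k :=
  σ₀ ∘ₗ ((Bialgebra.TensorProduct.map ψ φ).comp
    (Bialgebra.TensorProduct.comm k H H).toBialgHom : H ⊗[k] H →ₗc[k] A ⊗[k] B)

@[simp]
lemma pullbackPairing_tmul (σ₀ : A ⊗[k] B →ₗ[k] k) (ψ : H →ₐc[k] A) (φ : H →ₐc[k] B)
    (x y : H) :
    pullbackPairing σ₀ ψ φ (x ⊗ₜ y) = σ₀ (ψ y ⊗ₜ φ x) :=
  rfl

def ComulCommute (ψ : H →ₐc[k] A) (φ : H →ₐc[k] B) : Prop :=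
  TensorProduct.map (ψ : H →ₗ[k] A) (φ : H →ₗ[k] B) ∘ₗ comul =
    TensorProduct.map (ψ : H →ₗ[k] A) (φ : H →ₗ[k] B) ∘ₗ
      (TensorProduct.comm k H H).toLinearMap ∘ₗ comul

lemma ComulCommute.sum_swap {ψ : H →ₐc[k] A} {φ : H →ₐc[k] B} (hψφ : ComulCommute ψ φ)
    (f : A →ₗ[k] k) (g : B →ₗ[k] k) {y : H} {κ : Type*} (ry : Repr k y κ) :
    ∑ j ∈ ry.index, f (ψ (ry.left j)) * g (φ (ry.right j)) =
      ∑ j ∈ ry.index, f (ψ (ry.right j)) * g (φ (ry.left j)) := by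
  simpa [← ry.eq] using congr(TensorProduct.lid k k (TensorProduct.map f g ($hψφ y)))

end Pullback

section PullbackOfSkewPairing

variable {k A B H : Type} [Field k] [Ring A] [HopfAlgebra k A] [Ring B] [HopfAlgebra k B]
  [Ring H] [Bialgebra k H] {σ₀ : A ⊗[k] B →ₗ[k] k} {ψ : H →ₐc[k] A} {φ : H →ₐc[k] B}

lemma IsSkewPairing.conv_pullbackPairing_eq (hσ₀ : IsSkewPairing σ₀)
    (hψφ : ComulCommute ψ φ) :
    conv (sigmaEps (pullbackPairing σ₀ ψ φ)) (sigmaMul (pullbackPairing σ₀ ψ φ)) =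
      conv (epsSigma (pullbackPairing σ₀ ψ φ)) (mulSigma (pullbackPairing σ₀ ψ φ)) := by
  refine TensorProduct.ext_threefold' fun x y z => ?_
  set rx := ℛ k x
  set ry := ℛ k y
  set rz := ℛ k z
  rw [conv_sigmaEps_sigmaMul_tmul _ z rx ry, conv_epsSigma_mulSigma_tmul _ x ry rz]
  simp only [pullbackPairing_tmul, map_mul, hσ₀.apply_tmul_mul (rz.induced ψ),
    hσ₀.apply_mul_tmul _ _ (rx.induced φ), Repr.induced_index, Repr.induced_left,
    Repr.induced_right, Function.comp_apply]
  calc _ = ∑ i ∈ rx.index, ∑ l ∈ rz.index,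
          (∑ j ∈ ry.index,
            σ₀ (ψ (ry.left j) ⊗ₜ φ (rx.left i)) * σ₀ (ψ (rz.left l) ⊗ₜ φ (ry.right j))) *
            σ₀ (ψ (rz.right l) ⊗ₜ φ (rx.right i)) := by
        simp only [Finset.mul_sum, Finset.sum_mul, mul_assoc]
        exact Finset.sum_congr rfl fun i _ => Finset.sum_comm
    _ = ∑ i ∈ rx.index, ∑ l ∈ rz.index,
          (∑ j ∈ ry.index,
            σ₀ (ψ (ry.right j) ⊗ₜ φ (rx.left i)) * σ₀ (ψ (rz.left l) ⊗ₜ φ (ry.left j))) *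
            σ₀ (ψ (rz.right l) ⊗ₜ φ (rx.right i)) :=
        Finset.sum_congr rfl fun i _ => Finset.sum_congr rfl fun l _ => congrArg (· * _) <|
          hψφ.sum_swap (σ₀ ∘ₗ (TensorProduct.mk k A B).flip (φ (rx.left i)))
            (σ₀ ∘ₗ TensorProduct.mk k A B (ψ (rz.left l))) ry
    _ = _ := by
        simp only [Finset.mul_sum, Finset.sum_mul]
        refine Finset.sum_comm.trans <| (Finset.sum_congr rfl fun l _ => Finset.sum_comm).trans <|
          Finset.sum_comm.trans <| Finset.sum_congr rfl fun j _ => Finset.sum_congr rfl fun l _ =>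
            Finset.sum_congr rfl fun i _ => by ring

theorem IsSkewPairing.isHopfTwoCocycle_pullbackPairing (hσ₀ : IsSkewPairing σ₀)
    (hψφ : ComulCommute ψ φ) : IsHopfTwoCocycle (pullbackPairing σ₀ ψ φ) :=
  ⟨exists_conv_inverse_comp_coalgHom hσ₀.1 _,
    by rw [pullbackPairing_tmul, map_one, map_one, hσ₀.apply_one_tmul_one],
    hσ₀.conv_pullbackPairing_eq hψφ⟩

end PullbackOfSkewPairing

section Projections

variable (k A B : Type) [Field k] [Ring A] [Bialgebra k A] [Ring B] [Bialgebra k B]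

def tensorFst : A ⊗[k] B →ₐc[k] A :=
  (Bialgebra.TensorProduct.rid k k A).toBialgHom.comp
    (Bialgebra.TensorProduct.map (BialgHom.id k A) (Bialgebra.counitBialgHom k B))

def tensorSnd : A ⊗[k] B →ₐc[k] B :=
  (Bialgebra.TensorProduct.lid k B).toBialgHom.comp
    (Bialgebra.TensorProduct.map (Bialgebra.counitBialgHom k A) (BialgHom.id k B))

variable {k A B} in
@[simp]
lemma tensorFst_tmul (a : A) (b : B) : tensorFst k A B (a ⊗ₜ b) = counit (R := k) b • a :=
  rfl

variable {k A B} in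
@[simp]
lemma tensorSnd_tmul (a : A) (b : B) : tensorSnd k A B (a ⊗ₜ b) = counit (R := k) a • b :=
  rfl

lemma map_tensorFst_tensorSnd_comp_comul :
    TensorProduct.map (tensorFst k A B : A ⊗[k] B →ₗ[k] A) (tensorSnd k A B : A ⊗[k] B →ₗ[k] B)
      ∘ₗ comul = LinearMap.id := by
  refine TensorProduct.ext' fun a b => ?_
  conv_rhs => rw [← sum_smul_counit_eq (ℛ k a), ← sum_counit_smul (ℛ k b)]
  rw [LinearMap.comp_apply, ← ((ℛ k a).tmul (ℛ k b)).eq]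
  simp only [Repr.tmul_index, Repr.tmul_left, Repr.tmul_right, Finset.sum_product, map_sum,
    TensorProduct.map_tmul, LinearMap.coe_coe, tensorFst_tmul, tensorSnd_tmul,
    TensorProduct.tmul_sum, TensorProduct.tmul_smul, TensorProduct.smul_tmul', smul_smul,
    TensorProduct.sum_tmul, Finset.smul_sum, LinearMap.id_coe, id_eq]
  rw [Finset.sum_comm]
  simp only [mul_comm]

lemma map_tensorFst_tensorSnd_comp_comm_comp_comul :
    TensorProduct.map (tensorFst k A B : A ⊗[k] B →ₗ[k] A) (tensorSnd k A B : A ⊗[k] B →ₗ[k] B)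
      ∘ₗ (TensorProduct.comm k (A ⊗[k] B) (A ⊗[k] B)).toLinearMap ∘ₗ comul = LinearMap.id := by
  refine TensorProduct.ext' fun a b => ?_
  conv_rhs => rw [← sum_counit_smul (ℛ k a), ← sum_smul_counit_eq (ℛ k b)]
  rw [LinearMap.comp_apply, LinearMap.comp_apply, ← ((ℛ k a).tmul (ℛ k b)).eq]
  simp only [Repr.tmul_index, Repr.tmul_left, Repr.tmul_right, Finset.sum_product, map_sum,
    LinearEquiv.coe_coe, TensorProduct.comm_tmul, TensorProduct.map_tmul, LinearMap.coe_coe,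
    tensorFst_tmul, tensorSnd_tmul, TensorProduct.tmul_sum, TensorProduct.tmul_smul,
    TensorProduct.smul_tmul', smul_smul, TensorProduct.sum_tmul, Finset.smul_sum,
    LinearMap.id_coe, id_eq]
  rw [Finset.sum_comm]
  simp only [mul_comm]

lemma comulCommute_tensorFst_tensorSnd : ComulCommute (tensorFst k A B) (tensorSnd k A B) :=
  (map_tensorFst_tensorSnd_comp_comul k A B).trans
    (map_tensorFst_tensorSnd_comp_comm_comp_comul k A B).symm

end Projections

/-- If σ₀ is a skew pairing of Hopf algebras A and B, then
γ₀(a ⊗ b, c ⊗ d) = ε(a)·σ₀(c, b)·ε(d) is a Hopf 2-cocycle on the tensor product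
Hopf algebra A ⊗ B. -/
theorem skewPairing_gives_cocycle {k A B : Type} [Field k]
    [Ring A] [HopfAlgebra k A] [Ring B] [HopfAlgebra k B]
    (σ₀ : A ⊗[k] B →ₗ[k] k) (hσ₀ : IsSkewPairing σ₀) :
    IsHopfTwoCocycle
      (σ₀ ∘ₗ TensorProduct.map
          ((TensorProduct.lid k A).toLinearMap ∘ₗ
            TensorProduct.map Coalgebra.counit (LinearMap.id : A →ₗ[k] A))
          ((TensorProduct.rid k B).toLinearMap ∘ₗ
            TensorProduct.map (LinearMap.id : B →ₗ[k] B) Coalgebra.counit)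
        ∘ₗ (TensorProduct.tensorTensorTensorComm k A B A B).toLinearMap :
        (A ⊗[k] B) ⊗[k] (A ⊗[k] B) →ₗ[k] k) := by
  have hγ : σ₀ ∘ₗ TensorProduct.map
          ((TensorProduct.lid k A).toLinearMap ∘ₗ
            TensorProduct.map Coalgebra.counit (LinearMap.id : A →ₗ[k] A))
          ((TensorProduct.rid k B).toLinearMap ∘ₗ
            TensorProduct.map (LinearMap.id : B →ₗ[k] B) Coalgebra.counit)
        ∘ₗ (TensorProduct.tensorTensorTensorComm k A B A B).toLinearMap =
      pullbackPairing σ₀ (tensorFst k A B) (tensorSnd k A B) := by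
    refine TensorProduct.ext_fourfold' fun a b c d => ?_
    simp [← TensorProduct.smul_tmul', mul_left_comm]
  rw [hγ]
  exact hσ₀.isHopfTwoCocycle_pullbackPairing (comulCommute_tensorFst_tensorSnd k A B)

end
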